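/- arXiv:1601.04299 — 13 statements merged into one kernel-verified Lean document; each statement's English description precedes it below -/
import Mathlib

section
/- Generalized iteration in Mendler style: Let C and D be categories, F : C → C an endofunctor with initial algebra (μF, in), and L : C → D a functor with a right adjoint R. Let X be an object of D and Ψ a natural transformation from the functor c ↦ D(L c, X) to the functor c ↦ D(L(F c), X) (both contravariant functors C^op → Set). Then there exists a unique morphism h : L(μF) → X in D such that h ∘ L(in) = Ψ_{μF}(h). -/
open CategoryTheory Limits

universe v u v' u'

/-- **Generalized iteration in Mendler style** (Bird–Paterson).
Given an endofunctor `F` on `C` with an initial algebra `(μF, in)`, a functor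
`L : C ⥤ D` with a right adjoint `R`, an object `X : D`, and a family
`Ψ c : (L c ⟶ X) → (L (F c) ⟶ X)` natural in `c` (as a transformation between
the contravariant functors `D(L −, X)` and `D(L (F −), X)`), there is exactly one
morphism `h : L (μF) ⟶ X` with `L(in) ≫ h = Ψ (μF) h`. -/
theorem mendler_iteration
    {C : Type u} [Category.{v} C] {D : Type u'} [Category.{v'} D]
    (F : C ⥤ C) (A : Endofunctor.Algebra F) (hA : Limits.IsInitial A)
    (L : C ⥤ D) (R : D ⥤ C) (adj : L ⊣ R) (X : D)
    (Ψ : ∀ c : C, (L.obj c ⟶ X) → (L.obj (F.obj c) ⟶ X))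
    (Ψnat : ∀ {c c' : C} (f : c' ⟶ c) (g : L.obj c ⟶ X),
      Ψ c' (L.map f ≫ g) = L.map (F.map f) ≫ Ψ c g) :
    ∃! h : L.obj A.a ⟶ X, L.map A.str ≫ h = Ψ A.a h := by
  -- Transpose `Ψ (R X) (counit)` to get an algebra structure on `R X`.
  set s : F.obj (R.obj X) ⟶ R.obj X :=
    (adj.homEquiv _ _) (Ψ (R.obj X) (adj.counit.app X)) with hs
  have hsymm : (adj.homEquiv (F.obj (R.obj X)) X).symm s
      = Ψ (R.obj X) (adj.counit.app X) := Equiv.symm_apply_apply _ _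
  have hsymm' : L.map s ≫ adj.counit.app X = Ψ (R.obj X) (adj.counit.app X) := by
    rw [adj.homEquiv_counit] at hsymm; exact hsymm
  let B : Endofunctor.Algebra F := ⟨R.obj X, s⟩
  let k : A ⟶ B := hA.to B
  have hk : F.map k.f ≫ s = A.str ≫ k.f := k.h
  refine ⟨L.map k.f ≫ adj.counit.app X, ?_, ?_⟩
  · calc L.map A.str ≫ L.map k.f ≫ adj.counit.app X
        = L.map (F.map k.f) ≫ L.map s ≫ adj.counit.app X := by
          rw [← Category.assoc, ← L.map_comp, ← hk, L.map_comp, Category.assoc]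
      _ = L.map (F.map k.f) ≫ Ψ (R.obj X) (adj.counit.app X) := by rw [hsymm']
      _ = Ψ A.a (L.map k.f ≫ adj.counit.app X) := (Ψnat _ _).symm
  · intro h hh
    -- transpose `h`; it is an algebra morphism `A ⟶ B`, hence equals `k`.
    have halg : F.map ((adj.homEquiv A.a X) h) ≫ s = A.str ≫ (adj.homEquiv A.a X) h := by
      apply (adj.homEquiv _ _).symm.injective
      rw [adj.homEquiv_counit, adj.homEquiv_counit, L.map_comp, L.map_comp,
        Category.assoc, Category.assoc, hsymm', ← Ψnat]
      have h1 : L.map ((adj.homEquiv A.a X) h) ≫ adj.counit.app X = h := by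
        have := adj.homEquiv_counit (g := (adj.homEquiv A.a X) h)
        rw [Equiv.symm_apply_apply] at this
        exact this.symm
      rw [h1, hh]
    have : (⟨(adj.homEquiv A.a X) h, halg⟩ : A ⟶ B) = k := hA.hom_ext _ _
    have hf : (adj.homEquiv A.a X) h = k.f := congrArg Endofunctor.Algebra.Hom.f this
    calc h = (adj.homEquiv A.a X).symm ((adj.homEquiv A.a X) h) :=
          (Equiv.symm_apply_apply _ _).symm
      _ = L.map k.f ≫ adj.counit.app X := by rw [hf, adj.homEquiv_counit]
end

section
/- Fusion law for generalized Mendler iteration: with the data of the generalized iteration theorem (F : C → C with initial algebra μF, L : C → D with right adjoint, X : D, natural Ψ : D(L−,X) → D(L(F−),X)), let additionally L' : C → D be a functor, X' an object of D, Ψ' : D(L'−,X') → D(L'(F−),X') a natural transformation, and Φ : D(L−,X) → D(L'−,X') a natural transformation. If Φ_{F(μF)} ∘ Ψ_{μF} = Ψ'_{μF} ∘ Φ_{μF}, then Φ_{μF}(It(Ψ)) = It(Ψ'), where It(Ψ) denotes the unique morphism L(μF) → X given by generalized Mendler iteration (and similarly It(Ψ') the unique morphism for Ψ', assumed to exist,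 e.g. because L' also has a right adjoint). -/
open CategoryTheory Limits

universe v u v' u'

/-- **Fusion law for generalized Mendler iteration.**
With the data of the generalized-iteration theorem (`F : C ⥤ C` with initial algebra
`A = (μF, in)`, `L : C ⥤ D` with a right adjoint, `X : D`, natural
`Ψ : D(L−,X) → D(L(F−),X)`), and additionally a functor `L' : C ⥤ D`, an object `X'`,
a natural transformation `Ψ' : D(L'−,X') → D(L'(F−),X')`, and a natural transformation
`Φ : D(L−,X) → D(L'−,X')`: if `Φ_{F μF} ∘ Ψ_{μF} = Ψ'_{μF} ∘ Φ_{μF}` then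
`Φ_{μF} (It Ψ) = It Ψ'`, where `It Ψ` is the unique solution of the Mendler equation
for `Ψ` and `It Ψ'` the (unique) solution for `Ψ'`. -/
theorem mendler_fusion_law
    {C : Type u} [Category.{v} C] {D : Type u'} [Category.{v'} D]
    (F : C ⥤ C) (A : Endofunctor.Algebra F) (hA : Limits.IsInitial A)
    (L : C ⥤ D) (R : D ⥤ C) (adj : L ⊣ R) (X : D)
    (Ψ : ∀ c : C, (L.obj c ⟶ X) → (L.obj (F.obj c) ⟶ X))
    (Ψnat : ∀ {c c' : C} (f : c' ⟶ c) (g : L.obj c ⟶ X),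
      Ψ c' (L.map f ≫ g) = L.map (F.map f) ≫ Ψ c g)
    (L' : C ⥤ D) (X' : D)
    (Ψ' : ∀ c : C, (L'.obj c ⟶ X') → (L'.obj (F.obj c) ⟶ X'))
    (Ψ'nat : ∀ {c c' : C} (f : c' ⟶ c) (g : L'.obj c ⟶ X'),
      Ψ' c' (L'.map f ≫ g) = L'.map (F.map f) ≫ Ψ' c g)
    (Φ : ∀ c : C, (L.obj c ⟶ X) → (L'.obj c ⟶ X'))
    (Φnat : ∀ {c c' : C} (f : c' ⟶ c) (g : L.obj c ⟶ X),
      Φ c' (L.map f ≫ g) = L'.map f ≫ Φ c g)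
    -- the fusion condition `Φ_{F μF} ∘ Ψ_{μF} = Ψ'_{μF} ∘ Φ_{μF}`
    (hfuse : ∀ g : L.obj A.a ⟶ X, Φ (F.obj A.a) (Ψ A.a g) = Ψ' A.a (Φ A.a g))
    -- `It Ψ`: the unique solution for `Ψ`
    (it : L.obj A.a ⟶ X) (hit : L.map A.str ≫ it = Ψ A.a it)
    -- `It Ψ'`: the solution for `Ψ'`, assumed to exist and be unique
    (it' : L'.obj A.a ⟶ X') (hit' : L'.map A.str ≫ it' = Ψ' A.a it')
    (hit'uniq : ∀ h : L'.obj A.a ⟶ X', L'.map A.str ≫ h = Ψ' A.a h → h = it') :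
    Φ A.a it = it' := by
  apply hit'uniq
  rw [← Φnat A.str it, hit, hfuse]
end

section
/- If D is a univalent category and C any category, then the functor category [C,D] is univalent. -/
open CategoryTheory

universe v u v' u'

/-- A category is *univalent* if for all objects `a b` the canonical map
`idtoiso : (a = b) → (a ≅ b)` (defined by path induction, sending `refl` to the
identity isomorphism; in Mathlib this is `eqToIso`) is an equivalence of types. -/
def IsUnivalent (C : Type u) [Category.{v} C] : Prop :=
  ∀ a b : C, Function.Bijective (fun p : a = b => eqToIso p)

/-- If `D` is a univalent category and `C` any category, then the functor category
`[C, D]` is univalent. -/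
theorem functor_category_univalent
    (C : Type u) [Category.{v} C] (D : Type u') [Category.{v'} D]
    (hD : IsUnivalent D) : IsUnivalent (C ⥤ D) := by
  intro F G
  constructor
  · intro p q _
    exact Subsingleton.elim p q
  · intro α
    -- pointwise object equalities from univalence of D
    have hobj : ∀ X : C, F.obj X = G.obj X := fun X => ((hD _ _).2 (α.app X)).choose
    have heq : ∀ X : C, eqToIso (hobj X) = α.app X :=
      fun X => ((hD _ _).2 (α.app X)).choose_spec
    have hhom : ∀ X : C, eqToHom (hobj X) = (α.app X).hom := by
      intro X; rw [← heq X]; rfl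
    have hinv : ∀ X : C, eqToHom (hobj X).symm = (α.app X).inv := by
      intro X; rw [← heq X]; simp
    refine ⟨CategoryTheory.Functor.ext hobj ?_, ?_⟩
    · intro X Y f
      rw [hhom X, hinv Y, Iso.app_hom, Iso.app_inv, ← Category.assoc, ← α.hom.naturality f]
      simp
    · ext X
      simp only [eqToIso.hom, eqToHom_app]
      exact hhom X
end

section
/- If C is a univalent category and F : C → C is an endofunctor, then the category Alg(F) of F-algebras is univalent. -/
open CategoryTheory

universe v u

/-- If `C` is a univalent category and `F : C ⥤ C` an endofunctor, then the category
`Alg(F)` of `F`-algebras is univalent. -/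
theorem algebra_category_univalent
    (C : Type u) [Category.{v} C] (hC : IsUnivalent C) (F : C ⥤ C) :
    IsUnivalent (Endofunctor.Algebra F) := by
  intro A B
  constructor
  · intro p q _
    exact Subsingleton.elim p q
  · intro f
    obtain ⟨a, s⟩ := A
    obtain ⟨b, t⟩ := B
    -- the underlying iso on carriers
    have h1 : f.hom.f ≫ f.inv.f = 𝟙 a := by
      rw [← Endofunctor.Algebra.comp_f, f.hom_inv_id, Endofunctor.Algebra.id_f]
    have h2 : f.inv.f ≫ f.hom.f = 𝟙 b := by
      rw [← Endofunctor.Algebra.comp_f, f.inv_hom_id, Endofunctor.Algebra.id_f]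
    obtain ⟨p, hp⟩ := (hC a b).2 ⟨f.hom.f, f.inv.f, h1, h2⟩
    subst p
    have hf : f.hom.f = 𝟙 a := by
      have := congrArg Iso.hom hp
      simpa using this.symm
    have hst : s = t := by
      have := f.hom.h
      rw [hf] at this
      simpa using this.symm
    subst hst
    refine ⟨rfl, ?_⟩
    ext
    simpa using hf.symm
end

section
/- A subcategory of a univalent category determined by propositional predicates P on objects and P_{a,b} on morphisms (closed under identities and composition) is itself univalent, provided it is closed under isomorphisms in the following sense: for any objects (a,p_a), (b,p_b) of the subcategory and any isomorphism f : a ≅ b in C, the proof P_{a,b}(f) holds. In particular, replete subcategories of univalent categories are univalent. -/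
open CategoryTheory

universe v u

/-- A subcategory of `C`, given by a propositional predicate `P` on objects and a
propositional predicate `Q` on morphisms (with the `P`-proofs suppressed), closed
under identities and composition. -/
structure Subcategory (C : Type u) [Category.{v} C] where
  P : C → Prop
  Q : ∀ {a b : C}, (a ⟶ b) → Prop
  id_mem : ∀ a : C, P a → Q (𝟙 a)
  comp_mem : ∀ {a b c : C} (f : a ⟶ b) (g : b ⟶ c),
    P a → P b → P c → Q f → Q g → Q (f ≫ g)

variable {C : Type u} [Category.{v} C]

/-- The objects of the subcategory `C_P`. -/
def Subcategory.Obj (S : Subcategory C) : Type u := {a : C // S.P a}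

instance (S : Subcategory C) : Category S.Obj where
  Hom a b := {f : a.1 ⟶ b.1 // S.Q f}
  id a := ⟨𝟙 a.1, S.id_mem a.1 a.2⟩
  comp {a b c} f g := ⟨f.1 ≫ g.1, S.comp_mem f.1 g.1 a.2 b.2 c.2 f.2 g.2⟩
  id_comp f := Subtype.ext (Category.id_comp f.1)
  comp_id f := Subtype.ext (Category.comp_id f.1)
  assoc f g h := Subtype.ext (Category.assoc f.1 g.1 h.1)

/-- A subcategory of a univalent category, determined by propositional predicates on
objects and morphisms, is itself univalent provided it is closed under isomorphisms:
for any objects of the subcategory and any isomorphism `f` between them in `C`, the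
morphism predicate holds of `f.hom`.  In particular, replete subcategories of
univalent categories are univalent. -/
theorem subcategory_univalent
    (hC : IsUnivalent C) (S : Subcategory C)
    (hclosed : ∀ a b : C, S.P a → S.P b → ∀ f : a ≅ b, S.Q f.hom) :
    IsUnivalent S.Obj := by
  intro a b
  -- equality in the subtype ≃ equality in `C`
  let e1 : (a = b) ≃ (a.1 = b.1) :=
    { toFun := fun p => congrArg Subtype.val p
      invFun := fun h => Subtype.ext h
      left_inv := by intro p; subst p; cases a; rfl
      right_inv := by
        intro h
        rcases a with ⟨a, ha⟩
        rcases b with ⟨b, hb⟩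
        dsimp at h
        subst h
        rfl }
  -- equality in `C` ≃ isos in `C`, by univalence of `C`
  let e2 : (a.1 = b.1) ≃ (a.1 ≅ b.1) := Equiv.ofBijective _ (hC a.1 b.1)
  -- isos in `C` ≃ isos in the subcategory, by closedness
  let e3 : (a.1 ≅ b.1) ≃ (a ≅ b) :=
    { toFun := fun f =>
        { hom := ⟨f.hom, hclosed _ _ a.2 b.2 f⟩
          inv := ⟨f.inv, hclosed _ _ b.2 a.2 f.symm⟩
          hom_inv_id := Subtype.ext f.hom_inv_id
          inv_hom_id := Subtype.ext f.inv_hom_id }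
      invFun := fun g =>
        { hom := g.hom.1
          inv := g.inv.1
          hom_inv_id := congrArg Subtype.val g.hom_inv_id
          inv_hom_id := congrArg Subtype.val g.inv_hom_id }
      left_inv := by intro f; apply Iso.ext; rfl
      right_inv := by intro g; apply Iso.ext; apply Subtype.ext; rfl }
  have key : (fun p : a = b => eqToIso p) = ⇑(e1.trans (e2.trans e3)) := by
    funext p
    subst p
    apply Iso.ext
    apply Subtype.ext
    rfl
  rw [key]
  exact (e1.trans (e2.trans e3)).bijective
end

section
/- The bracket operation of a heterogeneous substitution system is natural: given a substitution system (T, α, ⦃−⦄) for a signature (H,θ), the assignment (Z,e) ↦ (f ↦ ⦃f⦄) is a natural transformation from the functor Ptd(C)(−, (T,η)) to the functor [C,C](T·U(−), T) (both contravariant on Ptd(C)). Concretely, for any morphism g : (Z',e') → (Z,e) of pointed endofunctors and f : (Z,e) → (T,η), one has ⦃f ∘ g⦄ = ⦃f⦄ ∘ (T·g). -/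
open CategoryTheory Limits

universe v u

/-- A pointed endofunctor on `C`. -/
structure Ptd (C : Type u) [Category.{v} C] where
  Z : C ⥤ C
  e : 𝟭 C ⟶ Z

/-- A *signature* over `C`: an endofunctor `H` on the endofunctor category `[C,C]`
together with a strength `θ : (H −)·U∼ ⟶ H (−·U∼)`, natural in both variables and
satisfying the unit and composition coherence laws (here `X·Z` is the composite
`Z ⋙ X`, i.e. `A ↦ X (Z A)`). -/
structure Signature (C : Type u) [Category.{v} C] where
  H : (C ⥤ C) ⥤ (C ⥤ C)
  θ : ∀ (X : C ⥤ C) (Z : Ptd C), (Z.Z ⋙ H.obj X) ⟶ H.obj (Z.Z ⋙ X)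
  θ_nat_X : ∀ {X X' : C ⥤ C} (α : X ⟶ X') (Z : Ptd C),
      Functor.whiskerLeft Z.Z (H.map α) ≫ θ X' Z = θ X Z ≫ H.map (Functor.whiskerLeft Z.Z α)
  θ_nat_Z : ∀ (X : C ⥤ C) {Z Z' : Ptd C} (g : Z.Z ⟶ Z'.Z), Z.e ≫ g = Z'.e →
      Functor.whiskerRight g (H.obj X) ≫ θ X Z' = θ X Z ≫ H.map (Functor.whiskerRight g X)
  θ_id : ∀ X : C ⥤ C,
      θ X ⟨𝟭 C, 𝟙 (𝟭 C)⟩ =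
        (Functor.leftUnitor (H.obj X)).hom ≫ H.map (Functor.leftUnitor X).inv
  θ_comp : ∀ (X : C ⥤ C) (Z Z' : Ptd C),
      θ X ⟨Z.Z ⋙ Z'.Z, Z.e ≫ Functor.whiskerLeft Z.Z Z'.e⟩ =
        (Functor.associator Z.Z Z'.Z (H.obj X)).hom ≫
          Functor.whiskerLeft Z.Z (θ X Z') ≫ θ (Z'.Z ⋙ X) Z ≫
          H.map (Functor.associator Z.Z Z'.Z X).inv

variable {C : Type u} [Category.{v} C]

/-- A *heterogeneous substitution system* for a signature `(H, θ)`: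
an `(Id + H)`-algebra, presented by its components `η : Id ⟶ T` and `τ : H T ⟶ T`,
together with, for every morphism of pointed endofunctors `f : (Z,e) ⟶ (T,η)`,
a unique bracket `⦃f⦄ : T·Z ⟶ T` satisfying the two substitution equations. -/
structure HSS (S : Signature C) where
  T : C ⥤ C
  η : 𝟭 C ⟶ T
  τ : S.H.obj T ⟶ T
  bracket : ∀ (Z : Ptd C) (f : Z.Z ⟶ T), Z.e ≫ f = η → (Z.Z ⋙ T ⟶ T)
  bracket_η : ∀ (Z : Ptd C) (f : Z.Z ⟶ T) (hf : Z.e ≫ f = η),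
      Functor.whiskerLeft Z.Z η ≫ bracket Z f hf = f
  bracket_τ : ∀ (Z : Ptd C) (f : Z.Z ⟶ T) (hf : Z.e ≫ f = η),
      Functor.whiskerLeft Z.Z τ ≫ bracket Z f hf = S.θ T Z ≫ S.H.map (bracket Z f hf) ≫ τ
  bracket_unique : ∀ (Z : Ptd C) (f : Z.Z ⟶ T) (hf : Z.e ≫ f = η)
      (h : Z.Z ⋙ T ⟶ T),
      Functor.whiskerLeft Z.Z η ≫ h = f →
      Functor.whiskerLeft Z.Z τ ≫ h = S.θ T Z ≫ S.H.map h ≫ τ →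
      h = bracket Z f hf

/-! `⦃f⦄ ∘ (T·g)` satisfies the two equations characterising `⦃f ∘ g⦄`: the interchange law
moves `T·g` past `η·Z'` and `τ·Z'`, and naturality of `θ` in the pointed argument moves it
through the strength. Uniqueness of the bracket concludes. -/

namespace HSS

variable {S : Signature C} (hss : HSS S) {Z' Z : Ptd C} (g : Z'.Z ⟶ Z.Z)
  (f : Z.Z ⟶ hss.T) (hf : Z.e ≫ f = hss.η)

lemma whiskerLeft_η_comp_whiskerRight_comp_bracket :
    Functor.whiskerLeft Z'.Z hss.η ≫ Functor.whiskerRight g hss.T ≫ hss.bracket Z f hf =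
      g ≫ f := by
  rw [Functor.whiskerLeft_comp_whiskerRight_assoc, hss.bracket_η]
  rfl

lemma whiskerLeft_τ_comp_whiskerRight_comp_bracket (hg : Z'.e ≫ g = Z.e) :
    Functor.whiskerLeft Z'.Z hss.τ ≫ Functor.whiskerRight g hss.T ≫ hss.bracket Z f hf =
      S.θ hss.T Z' ≫ S.H.map (Functor.whiskerRight g hss.T ≫ hss.bracket Z f hf) ≫ hss.τ := by
  rw [Functor.whiskerLeft_comp_whiskerRight_assoc, hss.bracket_τ,
    reassoc_of% (S.θ_nat_Z hss.T g hg), Functor.map_comp_assoc]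

end HSS

/-- **Naturality of the bracket operation** of a heterogeneous substitution system:
for any morphism of pointed endofunctors `g : (Z',e') ⟶ (Z,e)` and any pointed
morphism `f : (Z,e) ⟶ (T,η)`, one has `⦃f ∘ g⦄ = ⦃f⦄ ∘ (T·g)`; i.e., the assignment
`(Z,e) ↦ (f ↦ ⦃f⦄)` is a natural transformation from `Ptd(C)(−,(T,η))` to
`[C,C](T·U(−), T)`. -/
theorem bracket_natural (S : Signature C) (hss : HSS S)
    (Z' Z : Ptd C) (g : Z'.Z ⟶ Z.Z) (hg : Z'.e ≫ g = Z.e)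
    (f : Z.Z ⟶ hss.T) (hf : Z.e ≫ f = hss.η)
    (hgf : Z'.e ≫ (g ≫ f) = hss.η) :
    hss.bracket Z' (g ≫ f) hgf = Functor.whiskerRight g hss.T ≫ hss.bracket Z f hf :=
  (hss.bracket_unique Z' (g ≫ f) hgf _
    (hss.whiskerLeft_η_comp_whiskerRight_comp_bracket g f hf)
    (hss.whiskerLeft_τ_comp_whiskerRight_comp_bracket g f hf hg)).symm
end

section
/- The category HSS(H,θ) of heterogeneous substitution systems is a replete subcategory of the category of (Id + H)-algebras: given a substitution system (T,α,⦃−⦄), an algebra (T',α'), and an algebra isomorphism β : (T,α) → (T',α'), then (T',α') carries a (necessarily unique) bracket operation, defined for f : (Z,e) → (T',η') by ⦃f⦄' := β ∘ ⦃β^{-1} ∘ f⦄ ∘ (β^{-1}·Z), and β is compatible with the brackets (i.e., β ∘ ⦃g⦄ = ⦃β ∘ g⦄' ∘ (β·Z) for all pointed g : (Z,e) → (T,η)). -/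
open CategoryTheory Limits

universe v u

variable {C : Type u} [Category.{v} C]

/-- The bracket transported along an algebra isomorphism `β : (T,α) ≅ (T',α')`:
`⦃f⦄' := β ∘ ⦃β⁻¹ ∘ f⦄ ∘ (β⁻¹ · Z)`. -/
def transportedBracket (S : Signature C) (hss : HSS S) {T' : C ⥤ C}
    (β : hss.T ≅ T') (Z : Ptd C) (f : Z.Z ⟶ T')
    (hg : Z.e ≫ (f ≫ β.inv) = hss.η) : Z.Z ⋙ T' ⟶ T' :=
  Functor.whiskerLeft Z.Z β.inv ≫ hss.bracket Z (f ≫ β.inv) hg ≫ β.hom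

/-! Conjugation by an algebra isomorphism `β`, `h ↦ β ∘ h ∘ (β⁻¹ · Z)`, carries solutions of the
bracket equations for `f` over `(T, α)` to solutions for `β ∘ f` over `(T', α')`. Since `β⁻¹` is
again an algebra morphism, conjugation by `β⁻¹` carries them back, so existence and uniqueness of
brackets transfer from `T` to `T'`, and compatibility of `β` is the transported bracket unfolded. -/

section Transport

variable {T T' : C ⥤ C}

def IsAlgHom (S : Signature C) (η : 𝟭 C ⟶ T) (τ : S.H.obj T ⟶ T)
    (η' : 𝟭 C ⟶ T') (τ' : S.H.obj T' ⟶ T') (β : T ⟶ T') : Prop :=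
  η ≫ β = η' ∧ τ ≫ β = S.H.map β ≫ τ'

def IsBracket (S : Signature C) (η : 𝟭 C ⟶ T) (τ : S.H.obj T ⟶ T) (Z : Ptd C)
    (f : Z.Z ⟶ T) (h : Z.Z ⋙ T ⟶ T) : Prop :=
  Functor.whiskerLeft Z.Z η ≫ h = f ∧
    Functor.whiskerLeft Z.Z τ ≫ h = S.θ T Z ≫ S.H.map h ≫ τ

variable {S : Signature C} {η : 𝟭 C ⟶ T} {τ : S.H.obj T ⟶ T} {η' : 𝟭 C ⟶ T'} {τ' : S.H.obj T' ⟶ T'}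

theorem IsAlgHom.inv {β : T ≅ T'} (hβ : IsAlgHom S η τ η' τ' β.hom) :
    IsAlgHom S η' τ' η τ β.inv := by
  obtain ⟨hβη, hβτ⟩ := hβ
  constructor
  · rw [← hβη, Category.assoc, Iso.hom_inv_id, Category.comp_id]
  · rw [← cancel_epi (S.H.map β.hom), ← Category.assoc, ← hβτ]
    simp

theorem IsBracket.conj {β : T ≅ T'} (hβ : IsAlgHom S η τ η' τ' β.hom) {Z : Ptd C}
    {f : Z.Z ⟶ T} {h : Z.Z ⋙ T ⟶ T} (hh : IsBracket S η τ Z f h) :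
    IsBracket S η' τ' Z (f ≫ β.hom) (Functor.whiskerLeft Z.Z β.inv ≫ h ≫ β.hom) := by
  obtain ⟨hβη', hβτ'⟩ := hβ.inv
  obtain ⟨hη, hτ⟩ := hh
  constructor
  · rw [← Category.assoc, ← Functor.whiskerLeft_comp, hβη', reassoc_of% hη]
  · calc Functor.whiskerLeft Z.Z τ' ≫ Functor.whiskerLeft Z.Z β.inv ≫ h ≫ β.hom
        = Functor.whiskerLeft Z.Z (S.H.map β.inv) ≫ (Functor.whiskerLeft Z.Z τ ≫ h) ≫ β.hom := by
          simp only [← Functor.whiskerLeft_comp_assoc, hβτ', Category.assoc]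
      _ = S.θ T' Z ≫ S.H.map (Functor.whiskerLeft Z.Z β.inv ≫ h ≫ β.hom) ≫ τ' := by
          rw [hτ, Category.assoc, reassoc_of% (S.θ_nat_X β.inv Z)]
          simp [hβ.2]

end Transport

namespace HSS

variable {S : Signature C} (hss : HSS S)

theorem isBracket_bracket (Z : Ptd C) (f : Z.Z ⟶ hss.T) (hf : Z.e ≫ f = hss.η) :
    IsBracket S hss.η hss.τ Z f (hss.bracket Z f hf) :=
  ⟨hss.bracket_η Z f hf, hss.bracket_τ Z f hf⟩

theorem eq_bracket_of_isBracket {Z : Ptd C} {f : Z.Z ⟶ hss.T} (hf : Z.e ≫ f = hss.η)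
    {h : Z.Z ⋙ hss.T ⟶ hss.T} (hh : IsBracket S hss.η hss.τ Z f h) :
    h = hss.bracket Z f hf :=
  hss.bracket_unique Z f hf h hh.1 hh.2

theorem bracket_congr {Z : Ptd C} {f f' : Z.Z ⟶ hss.T} (hf : Z.e ≫ f = hss.η)
    (hf' : Z.e ≫ f' = hss.η) (e : f = f') : hss.bracket Z f hf = hss.bracket Z f' hf' := by
  subst e; rfl

end HSS

/-- **`HSS(H,θ)` is a replete subcategory of the category of `(Id+H)`-algebras**:
given a substitution system `(T,α,⦃−⦄)`, an algebra `(T',α')` (presented by `η'`,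
`τ'`), and an algebra isomorphism `β : (T,α) ≅ (T',α')`, the algebra `(T',α')`
carries a (necessarily unique) bracket operation, given by
`⦃f⦄' := β ∘ ⦃β⁻¹ ∘ f⦄ ∘ (β⁻¹ · Z)`, and `β` is compatible with the brackets on
either side. -/
theorem hss_replete (S : Signature C) (hss : HSS S)
    (T' : C ⥤ C) (η' : 𝟭 C ⟶ T') (τ' : S.H.obj T' ⟶ T')
    (β : hss.T ≅ T')
    (hβη : hss.η ≫ β.hom = η')
    (hβτ : hss.τ ≫ β.hom = S.H.map β.hom ≫ τ') :
    (∀ (Z : Ptd C) (f : Z.Z ⟶ T') (hf : Z.e ≫ f = η')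
        (hg : Z.e ≫ (f ≫ β.inv) = hss.η),
      -- `⦃f⦄'` satisfies the two bracket equations …
      (Functor.whiskerLeft Z.Z η' ≫ transportedBracket S hss β Z f hg = f) ∧
      (Functor.whiskerLeft Z.Z τ' ≫ transportedBracket S hss β Z f hg =
        S.θ T' Z ≫ S.H.map (transportedBracket S hss β Z f hg) ≫ τ') ∧
      -- … and is the unique such morphism
      (∀ h : Z.Z ⋙ T' ⟶ T',
        Functor.whiskerLeft Z.Z η' ≫ h = f →
        Functor.whiskerLeft Z.Z τ' ≫ h = S.θ T' Z ≫ S.H.map h ≫ τ' →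
        h = transportedBracket S hss β Z f hg)) ∧
    -- `β` is compatible with the brackets: `β ∘ ⦃g⦄ = ⦃β ∘ g⦄' ∘ (β · Z)`
    (∀ (Z : Ptd C) (g : Z.Z ⟶ hss.T) (hg : Z.e ≫ g = hss.η)
        (hg' : Z.e ≫ ((g ≫ β.hom) ≫ β.inv) = hss.η),
      hss.bracket Z g hg ≫ β.hom =
        Functor.whiskerLeft Z.Z β.hom ≫ transportedBracket S hss β Z (g ≫ β.hom) hg') := by
  have hβ : IsAlgHom S hss.η hss.τ η' τ' β.hom := ⟨hβη, hβτ⟩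
  refine ⟨fun Z f _ hg => ?_, fun Z g hg hg' => ?_⟩
  · have hex : IsBracket S η' τ' Z f (transportedBracket S hss β Z f hg) := by
      simpa [transportedBracket] using (hss.isBracket_bracket Z _ hg).conj hβ
    refine ⟨hex.1, hex.2, fun h hη hτ => ?_⟩
    have hback := hss.eq_bracket_of_isBracket hg
      ((show IsBracket S η' τ' Z f h from ⟨hη, hτ⟩).conj (β := β.symm) hβ.inv)
    rw [transportedBracket, ← hback]
    simp [← Functor.whiskerLeft_comp_assoc]
  · rw [transportedBracket, hss.bracket_congr hg' hg (by simp)]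
    simp [← Functor.whiskerLeft_comp_assoc]
end

section
/- Functoriality of the monad construction: a morphism β : (T,η,τ,⦃−⦄) → (T',η',τ',⦃−⦄') of heterogeneous substitution systems is a monad morphism between the induced monads (T,η,μ^T) and (T',η',μ^{T'}), i.e., β ∘ η = η' and β ∘ μ^T = μ^{T'} ∘ (β·β). Consequently the assignment of monads to substitution systems extends to a functor HSS(H,θ) → Mon(C). -/
open CategoryTheory Limits

universe v u

variable {C : Type u} [Category.{v} C]

/-!
Taking `Z = (T, η)` and `f = id` in the morphism law gives `β ∘ μ^T = ⦃β⦄' ∘ (T·β)`.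
The bracket is natural in its pointed argument: for pointed `g : (Z, e) ⟶ (Z', e')`,
`⦃f⦄ ∘ (g·T)` satisfies the substitution equations of `⦃f ∘ g⦄` (the `τ`-equation by
naturality of `θ` in `Z`), so the two agree by uniqueness. With `g = β`, `f = id` this
identifies `⦃β⦄'` with `μ^{T'} ∘ (β·T')`.
-/

namespace HSS

variable {S : Signature C}

theorem bracket_comp (B : HSS S) {Z Z' : Ptd C} (g : Z.Z ⟶ Z'.Z) (hg : Z.e ≫ g = Z'.e)
    (f : Z'.Z ⟶ B.T) (hf : Z'.e ≫ f = B.η) (hgf : Z.e ≫ g ≫ f = B.η) :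
    B.bracket Z (g ≫ f) hgf = Functor.whiskerRight g B.T ≫ B.bracket Z' f hf := by
  refine (B.bracket_unique Z (g ≫ f) hgf _ ?_ ?_).symm
  · rw [← Category.assoc, Functor.whiskerLeft_comp_whiskerRight, Category.assoc,
      B.bracket_η]
    rfl
  · rw [← Category.assoc, Functor.whiskerLeft_comp_whiskerRight, Category.assoc,
      B.bracket_τ, ← Category.assoc, S.θ_nat_Z B.T g hg, Category.assoc, Functor.map_comp,
      Category.assoc]

end HSS

theorem hss_morphism_is_monad_morphism_general (S : Signature C)
    (A B : HSS S) (β : A.T ⟶ B.T)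
    (hη : A.η ≫ β = B.η)
    (hbr : ∀ (Z : Ptd C) (f : Z.Z ⟶ A.T) (hf : Z.e ≫ f = A.η)
        (hf' : Z.e ≫ (f ≫ β) = B.η),
      A.bracket Z f hf ≫ β = Functor.whiskerLeft Z.Z β ≫ B.bracket Z (f ≫ β) hf')
    (μA : A.T ⋙ A.T ⟶ A.T)
    (hμA : μA = A.bracket ⟨A.T, A.η⟩ (𝟙 A.T) (Category.comp_id A.η))
    (μB : B.T ⋙ B.T ⟶ B.T)
    (hμB : μB = B.bracket ⟨B.T, B.η⟩ (𝟙 B.T) (Category.comp_id B.η)) :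
    μA ≫ β = NatTrans.hcomp β β ≫ μB := by
  subst hμA hμB
  have hβ : (⟨A.T, A.η⟩ : Ptd C).e ≫ (𝟙 A.T ≫ β) = B.η := by
    rwa [Category.id_comp]
  have hβ_mult : B.bracket ⟨A.T, A.η⟩ (𝟙 A.T ≫ β) hβ =
      Functor.whiskerRight β B.T ≫ B.bracket ⟨B.T, B.η⟩ (𝟙 B.T) (Category.comp_id B.η) := by
    rw [← B.bracket_comp (Z := ⟨A.T, A.η⟩) (Z' := ⟨B.T, B.η⟩) β hη _ _
      (by rwa [Category.comp_id])]
    congr 1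
    rw [Category.id_comp, Category.comp_id]
  rw [hbr _ _ _ hβ, hβ_mult, Functor.NatTrans.hcomp_eq_whiskerLeft_comp_whiskerRight,
    Category.assoc]

/-- **Functoriality of the monad construction**: a morphism
`β : (T,η,τ,⦃−⦄) ⟶ (T',η',τ',⦃−⦄')` of heterogeneous substitution systems is a monad
morphism between the induced monads `(T,η,μ^T)` and `(T',η',μ^{T'})`, i.e. `β ∘ η = η'`
(a hypothesis on substitution-system morphisms) and `β ∘ μ^T = μ^{T'} ∘ (β·β)`, where
`β·β` is the horizontal composite.  Consequently the assignment of monads to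
substitution systems extends to a functor `HSS(H,θ) ⟶ Mon(C)`. -/
theorem hss_morphism_is_monad_morphism (S : Signature C)
    (A B : HSS S) (β : A.T ⟶ B.T)
    (hη : A.η ≫ β = B.η)
    (hτ : A.τ ≫ β = S.H.map β ≫ B.τ)
    (hbr : ∀ (Z : Ptd C) (f : Z.Z ⟶ A.T) (hf : Z.e ≫ f = A.η)
        (hf' : Z.e ≫ (f ≫ β) = B.η),
      A.bracket Z f hf ≫ β = Functor.whiskerLeft Z.Z β ≫ B.bracket Z (f ≫ β) hf')
    (μA : A.T ⋙ A.T ⟶ A.T)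
    (hμA : μA = A.bracket ⟨A.T, A.η⟩ (𝟙 A.T) (Category.comp_id A.η))
    (μB : B.T ⋙ B.T ⟶ B.T)
    (hμB : μB = B.bracket ⟨B.T, B.η⟩ (𝟙 B.T) (Category.comp_id B.η)) :
    μA ≫ β = NatTrans.hcomp β β ≫ μB :=
  hss_morphism_is_monad_morphism_general S A B β hη hbr μA hμA μB hμB
end

section
/- Substitution system on an initial algebra: let (H,θ) be a signature on a category C with coproducts, suppose [C,C] has an initial (Id + H)-algebra (T, α) = (μ(Id+H), in), and suppose that for every pointed endofunctor (Z,e), the precomposition functor −·Z : [C,C] → [C,C] has a right adjoint. Then (T, α) is a heterogeneous substitution system for (H,θ): for every pointed morphism f : (Z,e) → (T,η) there is a unique ⦃f⦄ : T·Z → T satisfying ⦃f⦄ ∘ η·Z = f and ⦃f⦄ ∘ τ·Z = τ ∘ H⦃f⦄ ∘ θ_{T,(Z,e)}. -/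
/-!
Under the adjunction `−·Z ⊣ R`, a morphism `h : T·Z ⟶ T` corresponds to its transpose
`T ⟶ R T`, and the two substitution equations for `h` say exactly that this transpose is a
morphism of `(Id + H)`-algebras from `(T, α)` to `R T` with structure map
`[f♯, (τ ∘ H ε ∘ θ_{R T, Z})♯]`; naturality of `θ` in its first argument is what lets `H` pass
through the transpose. Initiality of `(T, α)` gives exactly one such morphism
(generalized Mendler iteration).
-/

open CategoryTheory Limits

universe v u

variable {C : Type u} [Category.{v} C]

variable [Limits.HasBinaryCoproducts C]

/-- The endofunctor `Id + H` on `[C,C]` (using pointwise coproducts). -/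
noncomputable def IdPlusH (S : Signature C) : (C ⥤ C) ⥤ (C ⥤ C) where
  obj X := Limits.coprod (𝟭 C) (S.H.obj X)
  map f := Limits.coprod.map (𝟙 (𝟭 C)) (S.H.map f)
  map_id := by intros; simp
  map_comp := by intros; simp

namespace IdPlusH

variable {S : Signature C}

noncomputable def mkAlgebra (X : C ⥤ C) (η : 𝟭 C ⟶ X) (τ : S.H.obj X ⟶ X) :
    Endofunctor.Algebra (IdPlusH S) :=
  ⟨X, coprod.desc η τ⟩

theorem isAlgebraHom_mkAlgebra_iff (A : Endofunctor.Algebra (IdPlusH S)) {X : C ⥤ C}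
    (η : 𝟭 C ⟶ X) (τ : S.H.obj X ⟶ X) (k : A.a ⟶ X) :
    (IdPlusH S).map k ≫ (mkAlgebra X η τ).str = A.str ≫ k ↔
      (coprod.inl ≫ A.str) ≫ k = η ∧ (coprod.inr ≫ A.str) ≫ k = S.H.map k ≫ τ := by
  have hl : coprod.inl ≫ (IdPlusH S).map k ≫ (mkAlgebra X η τ).str = η := by
    change coprod.inl ≫ coprod.map (𝟙 _) (S.H.map k) ≫ coprod.desc η τ = η
    rw [coprod.inl_map_assoc, Category.id_comp]
    exact coprod.inl_desc _ _
  have hr : coprod.inr ≫ (IdPlusH S).map k ≫ (mkAlgebra X η τ).str = S.H.map k ≫ τ := by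
    change coprod.inr ≫ coprod.map (𝟙 _) (S.H.map k) ≫ coprod.desc η τ = _
    rw [coprod.inr_map_assoc]
    exact S.H.map k ≫= coprod.inr_desc _ _
  -- `A.str` is typed over `(IdPlusH S).obj A.a`, only defeq to `𝟭 C ⨿ S.H.obj A.a`,
  -- so `rw [Category.assoc]` fails on `coprod.inl ≫ A.str`: reassociate by terms instead.
  constructor
  · intro hk
    exact ⟨(Category.assoc _ _ _).trans ((coprod.inl ≫= hk).symm.trans hl),
      (Category.assoc _ _ _).trans ((coprod.inr ≫= hk).symm.trans hr)⟩
  · rintro ⟨hη, hτ⟩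
    apply coprod.hom_ext
    · exact hl.trans (hη.symm.trans (Category.assoc _ _ _))
    · exact hr.trans (hτ.symm.trans (Category.assoc _ _ _))

theorem existsUnique_fold_of_isInitial {A : Endofunctor.Algebra (IdPlusH S)}
    (hA : IsInitial A) (X : C ⥤ C) (η : 𝟭 C ⟶ X) (τ : S.H.obj X ⟶ X) :
    ∃! k : A.a ⟶ X,
      (coprod.inl ≫ A.str) ≫ k = η ∧ (coprod.inr ≫ A.str) ≫ k = S.H.map k ≫ τ := by
  refine ⟨(hA.to (mkAlgebra X η τ)).f,
    (isAlgebraHom_mkAlgebra_iff A η τ _).mp (hA.to _).h, fun k hk => ?_⟩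
  exact congrArg Endofunctor.Algebra.Hom.f
    (hA.hom_ext (⟨k, (isAlgebraHom_mkAlgebra_iff A η τ k).mpr hk⟩ : A ⟶ mkAlgebra X η τ)
      (hA.to _))

end IdPlusH

theorem CategoryTheory.Adjunction.comp_homEquiv_eq_homEquiv_iff {D E : Type*} [Category D]
    [Category E] {F : D ⥤ E} {G : E ⥤ D} (adj : F ⊣ G) {X' X : D} {Y : E} (g : X' ⟶ X)
    (h : F.obj X ⟶ Y) (f : F.obj X' ⟶ Y) :
    g ≫ adj.homEquiv X Y h = adj.homEquiv X' Y f ↔ F.map g ≫ h = f := by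
  rw [← adj.homEquiv_naturality_left, (adj.homEquiv _ _).apply_eq_iff_eq]

section Mendler

omit [HasBinaryCoproducts C]

variable {S : Signature C} {Z : Ptd C} {R : (C ⥤ C) ⥤ (C ⥤ C)}
  (adj : (Functor.whiskeringLeft C C C).obj Z.Z ⊣ R) {X : C ⥤ C}

/-- The `H`-component of the algebra on `R X` whose fold is the transpose of `⦃f⦄`:
the paper's `Ψ_f` moved across the adjunction `−·Z ⊣ R`. -/
noncomputable def mendlerStep (τ : S.H.obj X ⟶ X) : S.H.obj (R.obj X) ⟶ R.obj X :=
  adj.homEquiv _ _ (S.θ (R.obj X) Z ≫ S.H.map (adj.counit.app X) ≫ τ)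

theorem comp_homEquiv_eq_map_comp_mendlerStep_iff (τ : S.H.obj X ⟶ X)
    (h : Z.Z ⋙ X ⟶ X) :
    τ ≫ adj.homEquiv X X h = S.H.map (adj.homEquiv X X h) ≫ mendlerStep adj τ ↔
      Functor.whiskerLeft Z.Z τ ≫ h = S.θ X Z ≫ S.H.map h ≫ τ := by
  have hθ : Functor.whiskerLeft Z.Z (S.H.map (adj.homEquiv X X h)) ≫ S.θ (R.obj X) Z ≫
      S.H.map (adj.counit.app X) ≫ τ = S.θ X Z ≫ S.H.map h ≫ τ := by
    rw [← Category.assoc, S.θ_nat_X, Category.assoc, ← S.H.map_comp_assoc]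
    congr 3
    exact (adj.homEquiv_counit X X _).symm.trans ((adj.homEquiv X X).symm_apply_apply h)
  rw [mendlerStep, ← adj.homEquiv_naturality_left, ← adj.homEquiv_naturality_left,
    (adj.homEquiv _ _).apply_eq_iff_eq]
  exact Eq.congr_right hθ

end Mendler

/-- **Substitution system on an initial algebra** (Matthes–Uustalu, Thm. 15):
if `[C,C]` has an initial `(Id + H)`-algebra `(T, α)` and for every pointed
endofunctor `(Z,e)` the precomposition functor `−·Z : [C,C] ⥤ [C,C]` has a right
adjoint, then `(T, α)` is a heterogeneous substitution system for `(H,θ)`: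
with `η := inl ≫ α` and `τ := inr ≫ α`, for every pointed morphism
`f : (Z,e) ⟶ (T,η)` there is a unique `⦃f⦄ : T·Z ⟶ T` with `⦃f⦄ ∘ η·Z = f` and
`⦃f⦄ ∘ τ·Z = τ ∘ H ⦃f⦄ ∘ θ_{T,(Z,e)}`. -/
theorem initial_algebra_hss (S : Signature C)
    (A : Endofunctor.Algebra (IdPlusH S)) (hA : Limits.IsInitial A)
    (hadj : ∀ Z : Ptd C, ∃ R : (C ⥤ C) ⥤ (C ⥤ C),
      Nonempty (((Functor.whiskeringLeft C C C).obj Z.Z) ⊣ R))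
    (η : 𝟭 C ⟶ A.a) (hη : η = Limits.coprod.inl ≫ A.str)
    (τ : S.H.obj A.a ⟶ A.a) (hτ : τ = Limits.coprod.inr ≫ A.str) :
    ∀ (Z : Ptd C) (f : Z.Z ⟶ A.a), Z.e ≫ f = η →
      ∃! h : Z.Z ⋙ A.a ⟶ A.a,
        Functor.whiskerLeft Z.Z η ≫ h = f ∧
        Functor.whiskerLeft Z.Z τ ≫ h = S.θ A.a Z ≫ S.H.map h ≫ τ := by
  intro Z f _
  obtain ⟨R, ⟨adj⟩⟩ := hadj Z
  subst hη hτ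
  refine (Equiv.existsUnique_congr (adj.homEquiv A.a A.a) fun h => ?_).mpr
    (IdPlusH.existsUnique_fold_of_isInitial hA _ (adj.homEquiv _ _ f)
      (mendlerStep adj (coprod.inr ≫ A.str)))
  exact and_congr (adj.comp_homEquiv_eq_homEquiv_iff (coprod.inl ≫ A.str) h f).symm
    (comp_homEquiv_eq_map_comp_mendlerStep_iff adj _ h).symm
end

section
/- Lifting initiality: under the hypotheses of the previous theorem (initial (Id+H)-algebra exists and −·Z has a right adjoint for all pointed (Z,e)), the substitution system (T,α,⦃−⦄) constructed on the initial (Id+H)-algebra is an initial object in the category HSS(H,θ) of heterogeneous substitution systems. -/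
open CategoryTheory Limits

universe v u

variable {C : Type u} [Category.{v} C]

/-- A morphism of heterogeneous substitution systems: an `(Id+H)`-algebra morphism
compatible with the brackets on either side. -/
structure HSSHom {S : Signature C} (A B : HSS S) where
  β : A.T ⟶ B.T
  hη : A.η ≫ β = B.η
  hτ : A.τ ≫ β = S.H.map β ≫ B.τ
  hbr : ∀ (Z : Ptd C) (f : Z.Z ⟶ A.T) (hf : Z.e ≫ f = A.η)
      (hf' : Z.e ≫ (f ≫ β) = B.η),
    A.bracket Z f hf ≫ β = Functor.whiskerLeft Z.Z β ≫ B.bracket Z (f ≫ β) hf'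

theorem HSSHom.ext' {S : Signature C} {A B : HSS S} (g h : HSSHom A B)
    (w : g.β = h.β) : g = h := by
  cases g; cases h; cases w; rfl

instance HSScat (S : Signature C) : Category (HSS S) where
  Hom := HSSHom
  id A := { β := 𝟙 A.T
            hη := Category.comp_id _
            hτ := by simp
            hbr := by intro Z f hf hf'; simp }
  comp {A B D} g h :=
    { β := g.β ≫ h.β
      hη := by rw [← Category.assoc, g.hη, h.hη]
      hτ := by rw [← Category.assoc, g.hτ, Category.assoc, h.hτ, ← Category.assoc,
        ← Functor.map_comp]
      hbr := by
        intro Z f hf hf'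
        have h1 : Z.e ≫ (f ≫ g.β) = B.η := by rw [← Category.assoc, hf, g.hη]
        have h2 : Z.e ≫ ((f ≫ g.β) ≫ h.β) = D.η := by
          rw [← Category.assoc, h1, h.hη]
        rw [← Category.assoc, g.hbr Z f hf h1, Category.assoc,
          h.hbr Z (f ≫ g.β) h1 h2]
        simp }
  id_comp g := HSSHom.ext' _ _ (Category.id_comp g.β)
  comp_id g := HSSHom.ext' _ _ (Category.comp_id g.β)
  assoc f g h := HSSHom.ext' _ _ (Category.assoc f.β g.β h.β)

/-!
The candidate morphism out of `(T, η, τ)` is the unique `(Id+H)`-algebra morphism `!`;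
what has to be shown is `! ∘ ⦃f⦄ = ⦃! ∘ f⦄' ∘ (!·Z)`. Both sides solve the generalized
Mendler equations `h ∘ (η·Z) = ! ∘ f`, `h ∘ (τ·Z) = τ' ∘ H h ∘ θ`, and such solutions are
unique: transposing along `−·Z ⊣ R` turns them into algebra morphisms from the initial
algebra into `R T'` (naturality of `θ` in `X` makes the transposed equation an algebra
law). This is the fusion law for Mendler iteration.
-/

/-- `h : X·Z ⟶ T'` is a fixed point of the generalized Mendler iteration step
`Ψ(h) = [g, τ' ∘ H h ∘ θ_{X,Z}]` for the `(Id+H)`-algebra `(X, ηX, τX)`. -/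
def Signature.IsMendlerIterate (S : Signature C) (Z : Ptd C) {X T' : C ⥤ C}
    (ηX : 𝟭 C ⟶ X) (τX : S.H.obj X ⟶ X) (g : Z.Z ⋙ 𝟭 C ⟶ T') (τ' : S.H.obj T' ⟶ T')
    (h : Z.Z ⋙ X ⟶ T') : Prop :=
  Functor.whiskerLeft Z.Z ηX ≫ h = g ∧
    Functor.whiskerLeft Z.Z τX ≫ h = S.θ X Z ≫ S.H.map h ≫ τ'

namespace Signature

variable {S : Signature C} {Z : Ptd C} {R : (C ⥤ C) ⥤ (C ⥤ C)}
  {X T' : C ⥤ C} {ηX : 𝟭 C ⟶ X} {τX : S.H.obj X ⟶ X}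
  {g : Z.Z ⋙ 𝟭 C ⟶ T'} {τ' : S.H.obj T' ⟶ T'}

theorem IsMendlerIterate.homEquiv_isAlgHom
    (adj : (Functor.whiskeringLeft C C C).obj Z.Z ⊣ R) {h : Z.Z ⋙ X ⟶ T'}
    (hh : S.IsMendlerIterate Z ηX τX g τ' h) :
    ηX ≫ adj.homEquiv X T' h = adj.homEquiv _ _ g ∧
      τX ≫ adj.homEquiv X T' h = S.H.map (adj.homEquiv X T' h) ≫
        adj.homEquiv _ _ (S.θ (R.obj T') Z ≫ S.H.map (adj.counit.app T') ≫ τ') := by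
  obtain ⟨hη, hτ⟩ := hh
  have hcounit : h = Functor.whiskerLeft Z.Z (adj.homEquiv X T' h) ≫ adj.counit.app T' := by
    simpa using adj.homEquiv_counit (g := adj.homEquiv X T' h)
  refine ⟨?_, ?_⟩
  · rw [← hη]
    exact (adj.homEquiv_naturality_left ηX h).symm
  · rw [← adj.homEquiv_naturality_left, ← adj.homEquiv_naturality_left]
    congr 1
    change Functor.whiskerLeft Z.Z τX ≫ h = Functor.whiskerLeft Z.Z _ ≫ _
    rw [hτ, reassoc_of% (S.θ_nat_X (adj.homEquiv X T' h) Z), ← S.H.map_comp_assoc, ← hcounit]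

theorem IsMendlerIterate.eq_of_isInitial
    (adj : (Functor.whiskeringLeft C C C).obj Z.Z ⊣ R)
    {T : C ⥤ C} {ηT : 𝟭 C ⟶ T} {τT : S.H.obj T ⟶ T}
    (hinit : ∀ (T' : C ⥤ C) (η' : 𝟭 C ⟶ T') (τ' : S.H.obj T' ⟶ T'),
      ∃! β : T ⟶ T', ηT ≫ β = η' ∧ τT ≫ β = S.H.map β ≫ τ')
    {h₁ h₂ : Z.Z ⋙ T ⟶ T'} (hh₁ : S.IsMendlerIterate Z ηT τT g τ' h₁)
    (hh₂ : S.IsMendlerIterate Z ηT τT g τ' h₂) : h₁ = h₂ :=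
  (adj.homEquiv T T').injective <|
    (hinit _ _ _).unique (hh₁.homEquiv_isAlgHom adj) (hh₂.homEquiv_isAlgHom adj)

end Signature

namespace HSS

variable {S : Signature C} (T A : HSS S) {β : T.T ⟶ A.T}

theorem isMendlerIterate_bracket_comp
    (hβτ : T.τ ≫ β = S.H.map β ≫ A.τ) (Z : Ptd C) (f : Z.Z ⟶ T.T) (hf : Z.e ≫ f = T.η) :
    S.IsMendlerIterate Z T.η T.τ (f ≫ β) A.τ (T.bracket Z f hf ≫ β) := by
  refine ⟨by rw [reassoc_of% (T.bracket_η Z f hf)], ?_⟩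
  rw [reassoc_of% (T.bracket_τ Z f hf), hβτ, S.H.map_comp_assoc]

theorem isMendlerIterate_whiskerLeft_comp_bracket (hβη : T.η ≫ β = A.η)
    (hβτ : T.τ ≫ β = S.H.map β ≫ A.τ) (Z : Ptd C) (f : Z.Z ⟶ T.T)
    (hf : Z.e ≫ (f ≫ β) = A.η) :
    S.IsMendlerIterate Z T.η T.τ (f ≫ β) A.τ
      (Functor.whiskerLeft Z.Z β ≫ A.bracket Z (f ≫ β) hf) := by
  refine ⟨by rw [← Functor.whiskerLeft_comp_assoc, hβη, A.bracket_η], ?_⟩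
  rw [← Functor.whiskerLeft_comp_assoc, hβτ, Functor.whiskerLeft_comp_assoc, A.bracket_τ,
    reassoc_of% (S.θ_nat_X β Z), S.H.map_comp_assoc]

noncomputable def homOfIsInitialAlg
    (hadj : ∀ Z : Ptd C, ∃ R : (C ⥤ C) ⥤ (C ⥤ C),
      Nonempty (((Functor.whiskeringLeft C C C).obj Z.Z) ⊣ R))
    (hinit : ∀ (T' : C ⥤ C) (η' : 𝟭 C ⟶ T') (τ' : S.H.obj T' ⟶ T'),
      ∃! β : T.T ⟶ T', T.η ≫ β = η' ∧ T.τ ≫ β = S.H.map β ≫ τ') : T ⟶ A where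
  β := (hinit A.T A.η A.τ).choose
  hη := (hinit A.T A.η A.τ).choose_spec.1.1
  hτ := (hinit A.T A.η A.τ).choose_spec.1.2
  hbr Z f hf hf' := by
    obtain ⟨R, ⟨adj⟩⟩ := hadj Z
    obtain ⟨hβη, hβτ⟩ := (hinit A.T A.η A.τ).choose_spec.1
    exact (isMendlerIterate_bracket_comp T A hβτ Z f hf).eq_of_isInitial adj hinit
      (isMendlerIterate_whiskerLeft_comp_bracket T A hβη hβτ Z f hf')

end HSS

/-- **Lifting initiality** (via the fusion law): under the hypotheses of the
construction of a substitution system on an initial algebra (the carrier `(T,η,τ)`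
of the substitution system is an initial `(Id+H)`-algebra, and `−·Z` has a right
adjoint for every pointed `(Z,e)`), the substitution system built on the initial
`(Id+H)`-algebra is an initial object of the category `HSS(H,θ)` of heterogeneous
substitution systems. -/
theorem initial_hss (S : Signature C) (Thss : HSS S)
    (hadj : ∀ Z : Ptd C, ∃ R : (C ⥤ C) ⥤ (C ⥤ C),
      Nonempty (((Functor.whiskeringLeft C C C).obj Z.Z) ⊣ R))
    -- `(T, η, τ)` is an initial `(Id+H)`-algebra:
    (hinitalg : ∀ (T' : C ⥤ C) (η' : 𝟭 C ⟶ T') (τ' : S.H.obj T' ⟶ T'),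
      ∃! β : Thss.T ⟶ T', Thss.η ≫ β = η' ∧ Thss.τ ≫ β = S.H.map β ≫ τ') :
    Nonempty (Limits.IsInitial Thss) :=
  ⟨IsInitial.ofUniqueHom (fun A => Thss.homOfIsInitialAlg A hadj hinitalg) fun A m =>
    HSSHom.ext' _ _ ((hinitalg A.T A.η A.τ).choose_spec.2 m.β ⟨m.hη, m.hτ⟩)⟩
end

section
/- The property of being initial lifts: if β : (T,α) → (T',α') is an isomorphism in the category of (Id+H)-algebras, (T,α,⦃−⦄) is a substitution system, and (T',α') is equipped with the transported bracket ⦃f⦄' := β ∘ ⦃β^{-1}∘f⦄ ∘ (β^{-1}·Z), then the transported bracket is the unique bracket operation on (T',α') and ⦃f⦄' satisfies the substitution-system equations: ⦃f⦄' ∘ η'·Z = f and ⦃f⦄' ∘ τ'·Z = τ' ∘ H⦃f⦄' ∘ θ_{T',(Z,e)}. -/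
open CategoryTheory Limits

universe v u

variable {C : Type u} [Category.{v} C]

/-! Conjugation by `β`, `h ↦ β ∘ h ∘ (β⁻¹·Z)`, is a bijection between morphisms `T·Z ⟶ T` and
`T'·Z ⟶ T'`. Because `β` is an algebra morphism and `θ` is natural in its first argument, it
carries solutions of the substitution equations for `β⁻¹ ∘ f` exactly onto solutions for `f`.
The transported bracket is the conjugate of `⦃β⁻¹ ∘ f⦄`, so both existence and uniqueness
transfer from `T` to `T'`. -/

namespace Signature

def IsBracket (S : Signature C) {T : C ⥤ C} (η : 𝟭 C ⟶ T) (τ : S.H.obj T ⟶ T) (Z : Ptd C)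
    (f : Z.Z ⟶ T) (h : Z.Z ⋙ T ⟶ T) : Prop :=
  Functor.whiskerLeft Z.Z η ≫ h = f ∧ Functor.whiskerLeft Z.Z τ ≫ h = S.θ T Z ≫ S.H.map h ≫ τ

variable (S : Signature C) {T T' : C ⥤ C} (β : T ≅ T') (Z : Ptd C) (h : Z.Z ⋙ T ⟶ T)

theorem whiskerLeft_comp_homCongr_eq_iff {η : 𝟭 C ⟶ T} {η' : 𝟭 C ⟶ T'}
    (hβη : η ≫ β.hom = η') (f : Z.Z ⟶ T') :
    Functor.whiskerLeft Z.Z η' ≫ (Functor.isoWhiskerLeft Z.Z β).homCongr β h = f ↔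
      Functor.whiskerLeft Z.Z η ≫ h = f ≫ β.inv := by
  have hηinv : η' ≫ β.inv = η := (Iso.comp_inv_eq β).2 hβη.symm
  rw [Iso.eq_comp_inv, Iso.homCongr_apply, Functor.isoWhiskerLeft_inv, ← hηinv,
    Functor.whiskerLeft_comp]
  simp only [Category.assoc]

theorem whiskerLeft_comp_homCongr_eq_strength_iff {τ : S.H.obj T ⟶ T} {τ' : S.H.obj T' ⟶ T'}
    (hβτ : τ ≫ β.hom = S.H.map β.hom ≫ τ') :
    Functor.whiskerLeft Z.Z τ' ≫ (Functor.isoWhiskerLeft Z.Z β).homCongr β h =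
        S.θ T' Z ≫ S.H.map ((Functor.isoWhiskerLeft Z.Z β).homCongr β h) ≫ τ' ↔
      Functor.whiskerLeft Z.Z τ ≫ h = S.θ T Z ≫ S.H.map h ≫ τ := by
  have hτinv : τ' ≫ β.inv = S.H.map β.inv ≫ τ := by
    rw [Iso.comp_inv_eq, Category.assoc, hβτ, ← Category.assoc, ← Functor.map_comp,
      β.inv_hom_id, S.H.map_id, Category.id_comp]
  have hlhs : Functor.whiskerLeft Z.Z τ' ≫ (Functor.isoWhiskerLeft Z.Z β).homCongr β h =
      (Functor.isoWhiskerLeft Z.Z (S.H.mapIso β)).inv ≫ (Functor.whiskerLeft Z.Z τ ≫ h) ≫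
        β.hom := by
    rw [Iso.homCongr_apply, Functor.isoWhiskerLeft_inv, Functor.isoWhiskerLeft_inv,
      Functor.mapIso_inv, ← Category.assoc, ← Functor.whiskerLeft_comp, hτinv,
      Functor.whiskerLeft_comp]
    simp only [Category.assoc]
  have hrhs : S.θ T' Z ≫ S.H.map ((Functor.isoWhiskerLeft Z.Z β).homCongr β h) ≫ τ' =
      (Functor.isoWhiskerLeft Z.Z (S.H.mapIso β)).inv ≫ (S.θ T Z ≫ S.H.map h ≫ τ) ≫ β.hom := by
    simp only [Iso.homCongr_apply, Functor.isoWhiskerLeft_inv, Functor.mapIso_inv,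
      Functor.map_comp, Category.assoc]
    rw [reassoc_of% (S.θ_nat_X β.inv Z), hβτ]
  rw [hlhs, hrhs, Iso.cancel_iso_inv_left, cancel_mono]

theorem isBracket_homCongr_iff {η : 𝟭 C ⟶ T} {η' : 𝟭 C ⟶ T'} {τ : S.H.obj T ⟶ T}
    {τ' : S.H.obj T' ⟶ T'} (hβη : η ≫ β.hom = η') (hβτ : τ ≫ β.hom = S.H.map β.hom ≫ τ')
    (f : Z.Z ⟶ T') :
    S.IsBracket η' τ' Z f ((Functor.isoWhiskerLeft Z.Z β).homCongr β h) ↔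
      S.IsBracket η τ Z (f ≫ β.inv) h :=
  and_congr (whiskerLeft_comp_homCongr_eq_iff β Z h hβη f)
    (whiskerLeft_comp_homCongr_eq_strength_iff S β Z h hβτ)

end Signature

theorem HSS.isBracket_bracket_s15 {S : Signature C} (hss : HSS S) (Z : Ptd C) (f : Z.Z ⟶ hss.T)
    (hf : Z.e ≫ f = hss.η) : S.IsBracket hss.η hss.τ Z f (hss.bracket Z f hf) :=
  ⟨hss.bracket_η Z f hf, hss.bracket_τ Z f hf⟩

theorem HSS.eq_bracket_of_isBracket_s15 {S : Signature C} (hss : HSS S) {Z : Ptd C}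
    {f : Z.Z ⟶ hss.T} (hf : Z.e ≫ f = hss.η) {h : Z.Z ⋙ hss.T ⟶ hss.T}
    (hh : S.IsBracket hss.η hss.τ Z f h) : h = hss.bracket Z f hf :=
  hss.bracket_unique Z f hf h hh.1 hh.2

theorem transportedBracket_eq_homCongr (S : Signature C) (hss : HSS S) {T' : C ⥤ C}
    (β : hss.T ≅ T') (Z : Ptd C) (f : Z.Z ⟶ T') (hg : Z.e ≫ (f ≫ β.inv) = hss.η) :
    transportedBracket S hss β Z f hg =
      (Functor.isoWhiskerLeft Z.Z β).homCongr β (hss.bracket Z (f ≫ β.inv) hg) :=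
  rfl

theorem transported_bracket_is_unique_bracket_general (S : Signature C) (hss : HSS S)
    (T' : C ⥤ C) (η' : 𝟭 C ⟶ T') (τ' : S.H.obj T' ⟶ T')
    (β : hss.T ≅ T')
    (hβη : hss.η ≫ β.hom = η')
    (hβτ : hss.τ ≫ β.hom = S.H.map β.hom ≫ τ')
    (Z : Ptd C) (f : Z.Z ⟶ T')
    (hg : Z.e ≫ (f ≫ β.inv) = hss.η) :
    (Functor.whiskerLeft Z.Z η' ≫ transportedBracket S hss β Z f hg = f) ∧
    (Functor.whiskerLeft Z.Z τ' ≫ transportedBracket S hss β Z f hg =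
      S.θ T' Z ≫ S.H.map (transportedBracket S hss β Z f hg) ≫ τ') ∧
    (∀ h : Z.Z ⋙ T' ⟶ T',
      Functor.whiskerLeft Z.Z η' ≫ h = f →
      Functor.whiskerLeft Z.Z τ' ≫ h = S.θ T' Z ≫ S.H.map h ≫ τ' →
      h = transportedBracket S hss β Z f hg) := by
  rw [transportedBracket_eq_homCongr]
  set conj := (Functor.isoWhiskerLeft Z.Z β).homCongr β
  have hbracket : S.IsBracket η' τ' Z f (conj (hss.bracket Z (f ≫ β.inv) hg)) :=
    (S.isBracket_homCongr_iff β Z _ hβη hβτ f).2 (hss.isBracket_bracket_s15 Z _ hg)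
  refine ⟨hbracket.1, hbracket.2, fun h hη hτ => ?_⟩
  obtain ⟨h₀, rfl⟩ := conj.surjective h
  exact congrArg conj <| hss.eq_bracket_of_isBracket_s15 hg <|
    (S.isBracket_homCongr_iff β Z h₀ hβη hβτ f).1 ⟨hη, hτ⟩

/-- **Initiality-relevant transport of brackets along algebra isomorphisms:**
if `β : (T,α) ≅ (T',α')` is an isomorphism of `(Id+H)`-algebras (so
`β ∘ η = η'` and `β ∘ τ = τ' ∘ H β`), `(T,α,⦃−⦄)` is a substitution system,
and `(T',α')` is equipped with the transported bracket
`⦃f⦄' := β ∘ ⦃β⁻¹ ∘ f⦄ ∘ (β⁻¹ · Z)`, then for every pointed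
`f : (Z,e) ⟶ (T',η')` the transported bracket satisfies the two
substitution-system equations `⦃f⦄' ∘ η'·Z = f` and
`⦃f⦄' ∘ τ'·Z = τ' ∘ H ⦃f⦄' ∘ θ_{T',(Z,e)}`, and is the unique such morphism
(hence the unique bracket operation on `(T',α')`). -/
theorem transported_bracket_is_unique_bracket (S : Signature C) (hss : HSS S)
    (T' : C ⥤ C) (η' : 𝟭 C ⟶ T') (τ' : S.H.obj T' ⟶ T')
    (β : hss.T ≅ T')
    (hβη : hss.η ≫ β.hom = η')
    (hβτ : hss.τ ≫ β.hom = S.H.map β.hom ≫ τ')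
    (Z : Ptd C) (f : Z.Z ⟶ T') (hf : Z.e ≫ f = η')
    (hg : Z.e ≫ (f ≫ β.inv) = hss.η) :
    (Functor.whiskerLeft Z.Z η' ≫ transportedBracket S hss β Z f hg = f) ∧
    (Functor.whiskerLeft Z.Z τ' ≫ transportedBracket S hss β Z f hg =
      S.θ T' Z ≫ S.H.map (transportedBracket S hss β Z f hg) ≫ τ') ∧
    (∀ h : Z.Z ⋙ T' ⟶ T',
      Functor.whiskerLeft Z.Z η' ≫ h = f →
      Functor.whiskerLeft Z.Z τ' ≫ h = S.θ T' Z ≫ S.H.map h ≫ τ' →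
      h = transportedBracket S hss β Z f hg) :=
  transported_bracket_is_unique_bracket_general S hss T' η' τ' β hβη hβτ Z f hg
end

section
/- The explicit-flattening signature is a signature: H^Flat(T) := T·T (self-composition) together with θ^Flat_{X,(Z,e)} := X·e·X·Z : X·X·Z → X·Z·X·Z (inserting the point e of (Z,e) between the two copies of X) satisfies the unit and composition coherence laws of a signature. -/
/-! The component of `θ^Flat_{X,(Z,e)}` at `c` is `X (e_{X Z c})`. Componentwise, each law then
becomes `X` applied to a naturality square of a point (combined with `e ≫ g = e'` for naturality
in `(Z,e)`, and with the naturality of `α` for naturality in `X`); the unit law is `X` applied to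
an identity. -/

open CategoryTheory Limits

universe v u

variable {C : Type u} [Category.{v} C]

/-- The property of `(H, θ)` being a *signature*: `θ : (H −)·U∼ ⟶ H (−·U∼)` is
natural in both variables and satisfies the unit and composition coherence laws
(here `X·Z` is the composite `Z ⋙ X`). -/
structure IsSignature (H : (C ⥤ C) ⥤ (C ⥤ C))
    (θ : ∀ (X : C ⥤ C) (Z : Ptd C), (Z.Z ⋙ H.obj X) ⟶ H.obj (Z.Z ⋙ X)) : Prop where
  nat_X : ∀ {X X' : C ⥤ C} (α : X ⟶ X') (Z : Ptd C),
      Functor.whiskerLeft Z.Z (H.map α) ≫ θ X' Z = θ X Z ≫ H.map (Functor.whiskerLeft Z.Z α)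
  nat_Z : ∀ (X : C ⥤ C) {Z Z' : Ptd C} (g : Z.Z ⟶ Z'.Z), Z.e ≫ g = Z'.e →
      Functor.whiskerRight g (H.obj X) ≫ θ X Z' = θ X Z ≫ H.map (Functor.whiskerRight g X)
  unit : ∀ X : C ⥤ C,
      θ X ⟨𝟭 C, 𝟙 (𝟭 C)⟩ =
        (Functor.leftUnitor (H.obj X)).hom ≫ H.map (Functor.leftUnitor X).inv
  comp : ∀ (X : C ⥤ C) (Z Z' : Ptd C),
      θ X ⟨Z.Z ⋙ Z'.Z, Z.e ≫ Functor.whiskerLeft Z.Z Z'.e⟩ =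
        (Functor.associator Z.Z Z'.Z (H.obj X)).hom ≫
          Functor.whiskerLeft Z.Z (θ X Z') ≫ θ (Z'.Z ⋙ X) Z ≫
          H.map (Functor.associator Z.Z Z'.Z X).inv


/-- The explicit-flattening signature functor `H^Flat (T) := T·T` (self-composition),
acting on morphisms by horizontal composition. -/
def Hflat : (C ⥤ C) ⥤ (C ⥤ C) where
  obj X := X ⋙ X
  map f := NatTrans.hcomp f f
  map_id := by intros; ext; simp [NatTrans.hcomp]
  map_comp := by intros; ext; simp [NatTrans.hcomp]

/-- The strength `θ^Flat_{X,(Z,e)} := X·e·X·Z : X·X·Z ⟶ X·Z·X·Z`, inserting the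
point `e` of `(Z,e)` between the two copies of `X`. -/
def θflat (X : C ⥤ C) (Z : Ptd C) :
    (Z.Z ⋙ (Hflat (C := C)).obj X) ⟶ (Hflat (C := C)).obj (Z.Z ⋙ X) :=
  Functor.whiskerLeft (Z.Z ⋙ X) (Functor.whiskerRight Z.e X)

lemma Ptd.e_naturality (Z : Ptd C) {a b : C} (f : a ⟶ b) :
    f ≫ Z.e.app b = Z.e.app a ≫ Z.Z.map f :=
  Z.e.naturality f

@[simp]
lemma Hflat_obj_obj (X : C ⥤ C) (c : C) : ((Hflat (C := C)).obj X).obj c = X.obj (X.obj c) := rfl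

@[simp]
lemma Hflat_obj_map (X : C ⥤ C) {c d : C} (f : c ⟶ d) :
    ((Hflat (C := C)).obj X).map f = X.map (X.map f) := rfl

@[simp]
lemma Hflat_map_app {X X' : C ⥤ C} (α : X ⟶ X') (c : C) :
    ((Hflat (C := C)).map α).app c = α.app (X.obj c) ≫ X'.map (α.app c) := rfl

@[simp]
lemma θflat_app (X : C ⥤ C) (Z : Ptd C) (c : C) :
    (θflat X Z).app c = X.map (Z.e.app (X.obj (Z.Z.obj c))) := rfl

lemma θflat_naturality_X {X X' : C ⥤ C} (α : X ⟶ X') (Z : Ptd C) :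
    Functor.whiskerLeft Z.Z ((Hflat (C := C)).map α) ≫ θflat X' Z =
      θflat X Z ≫ (Hflat (C := C)).map (Functor.whiskerLeft Z.Z α) := by
  ext c
  simp [← Functor.map_comp, ← Ptd.e_naturality]

lemma θflat_naturality_Z (X : C ⥤ C) {Z Z' : Ptd C} (g : Z.Z ⟶ Z'.Z) (hg : Z.e ≫ g = Z'.e) :
    Functor.whiskerRight g ((Hflat (C := C)).obj X) ≫ θflat X Z' =
      θflat X Z ≫ (Hflat (C := C)).map (Functor.whiskerRight g X) := by
  ext c
  have hg_c : Z.e.app _ ≫ g.app _ = Z'.e.app (X.obj (Z.Z.obj c)) := congr_app hg _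
  simp [← Functor.map_comp, reassoc_of% hg_c, Ptd.e_naturality]

lemma θflat_unit (X : C ⥤ C) :
    θflat X ⟨𝟭 C, 𝟙 (𝟭 C)⟩ =
      (Functor.leftUnitor ((Hflat (C := C)).obj X)).hom ≫
        (Hflat (C := C)).map (Functor.leftUnitor X).inv := by
  ext c
  simp

lemma θflat_comp (X : C ⥤ C) (Z Z' : Ptd C) :
    θflat X ⟨Z.Z ⋙ Z'.Z, Z.e ≫ Functor.whiskerLeft Z.Z Z'.e⟩ =
      (Functor.associator Z.Z Z'.Z ((Hflat (C := C)).obj X)).hom ≫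
        Functor.whiskerLeft Z.Z (θflat X Z') ≫ θflat (Z'.Z ⋙ X) Z ≫
        (Hflat (C := C)).map (Functor.associator Z.Z Z'.Z X).inv := by
  ext c
  simp [← Functor.map_comp, Ptd.e_naturality]

/-- **The explicit-flattening signature is a signature**: `(H^Flat, θ^Flat)`
satisfies the unit and composition coherence laws (and the naturality conditions)
of a signature. -/
theorem flat_isSignature : IsSignature (Hflat (C := C)) (θflat (C := C)) :=
  ⟨θflat_naturality_X, θflat_naturality_Z, θflat_unit, θflat_comp⟩
end

section
/- The abstraction signature is a signature: for C with binary coproducts and a terminal object, H^Abs(T) := T·option, where option(X) := 1 + X, together with θ^Abs_{X,(Z,e)} whose component at A is X[e_{1+A} ∘ inl, Z(inr)] : X(1 + Z A) → X(Z(1 + A)), satisfies the unit and composition coherence laws of a signature. -/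
open CategoryTheory Limits

universe v u

variable {C : Type u} [Category.{v} C]

variable [Limits.HasBinaryCoproducts C] [Limits.HasTerminal C]

/-- The `option` functor `A ↦ 1 + A` ("context extension"). -/
noncomputable def optionF : C ⥤ C where
  obj A := Limits.coprod (⊤_ C) A
  map f := Limits.coprod.map (𝟙 (⊤_ C)) f
  map_id := by intros; simp
  map_comp := by intros; simp

/-- The abstraction signature functor `H^Abs (T) := T·option`, i.e.
`A ↦ T (1 + A)`. -/
noncomputable def Habs : (C ⥤ C) ⥤ (C ⥤ C) where
  obj T := optionF (C := C) ⋙ T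
  map f := Functor.whiskerLeft (optionF (C := C)) f
  map_id := by intros; simp
  map_comp := by intros; simp

/-- The strength `θ^Abs_{X,(Z,e)}`, whose component at `A` is
`X [e_{1+A} ∘ inl, Z(inr)] : X (1 + Z A) ⟶ X (Z (1 + A))`. -/
noncomputable def θabs (X : C ⥤ C) (Z : Ptd C) :
    (Z.Z ⋙ (Habs (C := C)).obj X) ⟶ (Habs (C := C)).obj (Z.Z ⋙ X) where
  app A := X.map (Limits.coprod.desc
    (Limits.coprod.inl ≫ Z.e.app ((optionF (C := C)).obj A))
    (Z.Z.map Limits.coprod.inr))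
  naturality := by
    intro A B f
    show X.map _ ≫ X.map _ = X.map _ ≫ X.map _
    erw [← X.map_comp, ← X.map_comp]
    congr 1
    apply Limits.coprod.hom_ext
    · simp [optionF, ← NatTrans.naturality]
      erw [Limits.coprod.inl_desc]; try erw [Limits.coprod.inl_desc]
    · simp only [optionF]
      rw [Limits.coprod.inr_map_assoc, Limits.coprod.inr_desc,
        Limits.coprod.inr_desc_assoc, ← Z.Z.map_comp, ← Z.Z.map_comp,
        Limits.coprod.inr_map]

/-! Every component of `θ^Abs_{X,Z}` is `X` applied to the morphism
`[e_{1+A} ∘ inl, Z(inr)] : 1 + Z A ⟶ Z (1 + A)`, which does not depend on `X`. Naturality in `X`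
is therefore the naturality square of `X ⟶ X'`, and the other three laws are the corresponding
identities between these morphisms, each checked on the two coprojections of `1 + Z A`. -/

noncomputable def optionSwap (Z : Ptd C) (A : C) :
    (⊤_ C) ⨿ Z.Z.obj A ⟶ Z.Z.obj ((⊤_ C) ⨿ A) :=
  coprod.desc (coprod.inl ≫ Z.e.app ((⊤_ C) ⨿ A)) (Z.Z.map coprod.inr)

@[simp]
lemma inl_optionSwap (Z : Ptd C) (A : C) :
    coprod.inl ≫ optionSwap Z A = coprod.inl ≫ Z.e.app ((⊤_ C) ⨿ A) := by
  rw [optionSwap, coprod.inl_desc]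

@[simp]
lemma inr_optionSwap (Z : Ptd C) (A : C) :
    coprod.inr ≫ optionSwap Z A = Z.Z.map coprod.inr := by
  rw [optionSwap, coprod.inr_desc]

@[simp]
lemma inl_optionSwap_assoc (Z : Ptd C) (A : C) {B : C} (h : Z.Z.obj ((⊤_ C) ⨿ A) ⟶ B) :
    coprod.inl ≫ optionSwap Z A ≫ h = coprod.inl ≫ Z.e.app ((⊤_ C) ⨿ A) ≫ h := by
  rw [← Category.assoc, inl_optionSwap, Category.assoc]

@[simp]
lemma inr_optionSwap_assoc (Z : Ptd C) (A : C) {B : C} (h : Z.Z.obj ((⊤_ C) ⨿ A) ⟶ B) :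
    coprod.inr ≫ optionSwap Z A ≫ h = Z.Z.map coprod.inr ≫ h := by
  rw [← Category.assoc, inr_optionSwap]

lemma eq_optionSwap {Z : Ptd C} {A : C} (f : (⊤_ C) ⨿ Z.Z.obj A ⟶ Z.Z.obj ((⊤_ C) ⨿ A))
    (hl : coprod.inl ≫ f = coprod.inl ≫ Z.e.app ((⊤_ C) ⨿ A))
    (hr : coprod.inr ≫ f = Z.Z.map coprod.inr) : f = optionSwap Z A :=
  coprod.hom_ext (by simpa using hl) (by simpa using hr)

lemma optionSwap_naturality {Z Z' : Ptd C} (g : Z.Z ⟶ Z'.Z) (hg : Z.e ≫ g = Z'.e) (A : C) :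
    coprod.map (𝟙 (⊤_ C)) (g.app A) ≫ optionSwap Z' A =
      optionSwap Z A ≫ g.app ((⊤_ C) ⨿ A) := by
  apply coprod.hom_ext
  · simp [← hg]
  · simp

lemma optionSwap_id (A : C) : optionSwap ⟨𝟭 C, 𝟙 (𝟭 C)⟩ A = 𝟙 _ :=
  (eq_optionSwap _ (by simp) (by simp)).symm

lemma optionSwap_comp (Z Z' : Ptd C) (A : C) :
    optionSwap ⟨Z.Z ⋙ Z'.Z, Z.e ≫ Functor.whiskerLeft Z.Z Z'.e⟩ A =
      optionSwap Z' (Z.Z.obj A) ≫ Z'.Z.map (optionSwap Z A) := by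
  refine (eq_optionSwap (Z := ⟨Z.Z ⋙ Z'.Z, Z.e ≫ Functor.whiskerLeft Z.Z Z'.e⟩) _ ?_ ?_).symm
  · simp [← Z'.e.naturality]
  · simp [← Z'.Z.map_comp]

/-- **The abstraction signature is a signature**: for `C` with binary coproducts and
a terminal object, `(H^Abs, θ^Abs)` satisfies the unit and composition coherence
laws (and the naturality conditions) of a signature. -/
theorem abs_isSignature : IsSignature (Habs (C := C)) (θabs (C := C)) := by
  refine ⟨fun α Z => ?_, fun X Z Z' g hg => ?_, fun X => ?_, fun X Z Z' => ?_⟩ <;> ext A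
  · exact (α.naturality (optionSwap Z A)).symm
  · show X.map (coprod.map (𝟙 _) (g.app A)) ≫ X.map (optionSwap Z' A) =
      X.map (optionSwap Z A) ≫ X.map (g.app _)
    rw [← X.map_comp, ← X.map_comp, optionSwap_naturality g hg]
  · show X.map (optionSwap ⟨𝟭 C, 𝟙 (𝟭 C)⟩ A) = 𝟙 _ ≫ 𝟙 _
    rw [optionSwap_id, X.map_id, Category.comp_id]
  · show X.map (optionSwap ⟨Z.Z ⋙ Z'.Z, Z.e ≫ Functor.whiskerLeft Z.Z Z'.e⟩ A) =
      𝟙 _ ≫ X.map (optionSwap Z' (Z.Z.obj A)) ≫ X.map (Z'.Z.map (optionSwap Z A)) ≫ 𝟙 _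
    rw [optionSwap_comp, X.map_comp, Category.id_comp, Category.comp_id]
end
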